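/- arXiv:1912.08285 — 2 statements merged into one kernel-verified Lean document; each statement's English description precedes it below -/
import Mathlib

section
/- For every unit vector v ∈ ℂ⁴ indexed by (Fin 2 × Fin 2), there exists a 4×4 unitary matrix U such that U (v v†) U† is entangled (not separable), where v v† denotes the rank-one projection onto v. In particular, no pure two-qubit state is absolutely separable. -/
open Matrix
open scoped Kronecker ComplexOrder

def IsDensityMatrix {n : Type*} [Fintype n] [DecidableEq n] (ρ : Matrix n n ℂ) : Prop :=
  ρ.PosSemidef ∧ ρ.trace = 1

/-- A bipartite density matrix is separable if it is a finite convex combination of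
Kronecker products of density matrices. -/
def IsSeparableState {m n : ℕ} (ρ : Matrix (Fin m × Fin n) (Fin m × Fin n) ℂ) : Prop :=
  ∃ (k : ℕ) (p : Fin k → ℝ) (σ : Fin k → Matrix (Fin m) (Fin m) ℂ)
    (τ : Fin k → Matrix (Fin n) (Fin n) ℂ),
    (∀ i, 0 ≤ p i) ∧ (∑ i, p i = 1) ∧
    (∀ i, IsDensityMatrix (σ i)) ∧ (∀ i, IsDensityMatrix (τ i)) ∧
    ρ = ∑ i, (p i : ℂ) • (σ i ⊗ₖ τ i)

/-!
A unitary carries any unit vector to the Bell vector `(|00⟩ + |11⟩)/√2`, so it suffices to see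
that the Bell projector is entangled. This is the Peres criterion: partial transposition sends
`σ ⊗ₖ τ` to `σ ⊗ₖ τᵀ`, so the partial transpose of a separable state is positive semidefinite,
whereas the partial transpose of the Bell projector takes the value `-1` at the singlet vector
`|01⟩ - |10⟩`.
-/

section UnitaryTransitivity

variable {𝕜 E : Type*} [RCLike 𝕜] [NormedAddCommGroup E] [InnerProductSpace 𝕜 E]
  [FiniteDimensional 𝕜 E]

theorem OrthonormalBasis.exists_apply_eq {ι : Type*} [Fintype ι]
    (hcard : Module.finrank 𝕜 E = Fintype.card ι) (i : ι) {x : E} (hx : ‖x‖ = 1) :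
    ∃ b : OrthonormalBasis ι 𝕜 E, b i = x := by
  have hx' : Orthonormal 𝕜 (({i} : Set ι).domRestrict fun _ => x) :=
    ⟨fun _ => hx, fun j k hjk => absurd (Subtype.ext (j.2.trans k.2.symm)) hjk⟩
  obtain ⟨b, hb⟩ := hx'.exists_orthonormalBasis_extension_of_card_eq hcard
  exact ⟨b, hb i rfl⟩

theorem exists_linearIsometryEquiv_apply_eq {x y : E} (hx : ‖x‖ = 1) (hy : ‖y‖ = 1) :
    ∃ f : E ≃ₗᵢ[𝕜] E, f x = y := by
  classical
  have hpos : 0 < Module.finrank 𝕜 E :=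
    Module.finrank_pos_iff_exists_ne_zero.mpr ⟨x, norm_ne_zero_iff.mp (by simp [hx])⟩
  let i : Fin (Module.finrank 𝕜 E) := ⟨0, hpos⟩
  obtain ⟨b₁, rfl⟩ := OrthonormalBasis.exists_apply_eq (Fintype.card_fin _).symm i hx
  obtain ⟨b₂, rfl⟩ := OrthonormalBasis.exists_apply_eq (Fintype.card_fin _).symm i hy
  exact ⟨b₁.repr.trans b₂.repr.symm, by simp⟩

end UnitaryTransitivity

theorem Matrix.exists_mem_unitaryGroup_mulVec_eq {𝕜 n : Type*} [RCLike 𝕜] [Fintype n]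
    [DecidableEq n] {x y : n → 𝕜} (hx : ‖WithLp.toLp 2 x‖ = 1) (hy : ‖WithLp.toLp 2 y‖ = 1) :
    ∃ U ∈ unitaryGroup n 𝕜, U *ᵥ x = y := by
  obtain ⟨f, hf⟩ := exists_linearIsometryEquiv_apply_eq (𝕜 := 𝕜) hx hy
  let e := EuclideanSpace.basisFun n 𝕜
  refine ⟨f.toMatrix e.toBasis e.toBasis, f.toMatrix_mem_unitaryGroup e e, ?_⟩
  exact (LinearMap.toMatrix_mulVec_repr e.toBasis e.toBasis f.toLinearMap _).trans
    (congrArg (fun z => ⇑(e.toBasis.repr z)) hf)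

theorem EuclideanSpace.norm_toLp_eq_sqrt_sum_normSq {n : Type*} [Fintype n] (x : n → ℂ) :
    ‖WithLp.toLp 2 x‖ = √(∑ i, Complex.normSq (x i)) := by
  simp [EuclideanSpace.norm_eq, Complex.normSq_eq_norm_sq]

theorem Matrix.mul_vecMulVec_star_mul_conjTranspose {n α : Type*} [Fintype n] [CommRing α]
    [StarRing α] (U : Matrix n n α) (v : n → α) :
    U * vecMulVec v (star v) * Uᴴ = vecMulVec (U *ᵥ v) (star (U *ᵥ v)) := by
  rw [mul_vecMulVec, vecMulVec_mul, star_mulVec]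

namespace Matrix

variable {m n R : Type*} [CommSemiring R]

def partialTranspose : Matrix (m × n) (m × n) R →ₗ[R] Matrix (m × n) (m × n) R where
  toFun ρ := of fun i j => ρ (i.1, j.2) (j.1, i.2)
  map_add' _ _ := rfl
  map_smul' _ _ := rfl

@[simp]
theorem partialTranspose_apply (ρ : Matrix (m × n) (m × n) R) (i j : m × n) :
    partialTranspose ρ i j = ρ (i.1, j.2) (j.1, i.2) :=
  rfl

theorem partialTranspose_kronecker (A : Matrix m m R) (B : Matrix n n R) :
    partialTranspose (A ⊗ₖ B) = A ⊗ₖ Bᵀ :=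
  rfl

end Matrix

theorem IsSeparableState.posSemidef_partialTranspose {m n : ℕ}
    {ρ : Matrix (Fin m × Fin n) (Fin m × Fin n) ℂ} (hρ : IsSeparableState ρ) :
    (partialTranspose ρ).PosSemidef := by
  obtain ⟨k, p, σ, τ, hp, -, hσ, hτ, rfl⟩ := hρ
  rw [map_sum]
  refine posSemidef_sum _ fun i _ => ?_
  rw [map_smul, partialTranspose_kronecker]
  exact ((hσ i).1.kronecker (hτ i).1.transpose).smul (by exact_mod_cast hp i)

noncomputable def bellVec : Fin 2 × Fin 2 → ℂ :=
  fun i => if i.1 = i.2 then (√2 : ℂ)⁻¹ else 0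

theorem norm_toLp_bellVec : ‖WithLp.toLp 2 bellVec‖ = 1 := by
  rw [EuclideanSpace.norm_toLp_eq_sqrt_sum_normSq, Real.sqrt_eq_one]
  norm_num [bellVec, Fintype.sum_prod_type]

theorem not_posSemidef_partialTranspose_bellVec :
    ¬ (partialTranspose (vecMulVec bellVec (star bellVec))).PosSemidef := by
  let singlet : Fin 2 × Fin 2 → ℂ := Pi.single (0, 1) 1 - Pi.single (1, 0) 1
  have hsq : (√2 : ℂ)⁻¹ * (√2 : ℂ)⁻¹ = 2⁻¹ := by
    rw [← mul_inv, ← Complex.ofReal_mul, Real.mul_self_sqrt zero_le_two]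
    norm_num
  have hvalue : star singlet ⬝ᵥ
      (partialTranspose (vecMulVec bellVec (star bellVec)) *ᵥ singlet) = -1 := by
    norm_num [singlet, dotProduct, mulVec, Fintype.sum_prod_type, vecMulVec_apply, bellVec, hsq]
  intro h
  have hnonneg := h.dotProduct_mulVec_nonneg singlet
  norm_num [hvalue, Complex.le_def] at hnonneg

theorem no_pure_state_absolutely_separable (v : (Fin 2 × Fin 2) → ℂ)
    (hv : ∑ i, Complex.normSq (v i) = 1) :
    ∃ U ∈ Matrix.unitaryGroup (Fin 2 × Fin 2) ℂ,
      ¬ IsSeparableState (U * (Matrix.of fun i j => v i * star (v j)) * Uᴴ) := by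
  have hv' : ‖WithLp.toLp 2 v‖ = 1 := by
    rw [EuclideanSpace.norm_toLp_eq_sqrt_sum_normSq, hv, Real.sqrt_one]
  obtain ⟨U, hU, hUv⟩ := exists_mem_unitaryGroup_mulVec_eq hv' norm_toLp_bellVec
  refine ⟨U, hU, fun hsep => not_posSemidef_partialTranspose_bellVec ?_⟩
  have hρ : U * vecMulVec v (star v) * Uᴴ = vecMulVec bellVec (star bellVec) := by
    rw [mul_vecMulVec_star_mul_conjTranspose, hUv]
  exact hρ ▸ hsep.posSemidef_partialTranspose
end

section
/- A two-qubit density matrix ρ has absolutely non-negative conditional entropy — i.e. S(U ρ U†) ≥ S((U ρ U†)^B) for every 4×4 unitary matrix U — if and only if S(ρ) ≥ log 2 (the entropy of ρ is at least one bit). -/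
open Matrix
open scoped ComplexOrder

open scoped Classical in
/-- The von Neumann entropy `S(ρ) = −Σᵢ λᵢ log λᵢ` (natural logarithm), where `λᵢ` are the
eigenvalues of the Hermitian matrix `ρ`; junk value `0` for non-Hermitian matrices. -/
noncomputable def vnEntropy {n : Type*} [Fintype n] [DecidableEq n]
    (ρ : Matrix n n ℂ) : ℝ :=
  if h : ρ.IsHermitian then -∑ i, h.eigenvalues i * Real.log (h.eigenvalues i) else 0

/-- The reduced density matrix (partial trace over the second factor). -/
noncomputable def reducedA {m n : ℕ} (ρ : Matrix (Fin m × Fin n) (Fin m × Fin n) ℂ) :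
    Matrix (Fin m) (Fin m) ℂ :=
  fun a b => ∑ e, ρ (a, e) (b, e)

/-- The reduced density matrix (partial trace over the first factor). -/
noncomputable def reducedB {m n : ℕ} (ρ : Matrix (Fin m × Fin n) (Fin m × Fin n) ℂ) :
    Matrix (Fin n) (Fin n) ℂ :=
  fun e f => ∑ a, ρ (a, e) (a, f)

/-!
The entropy is a spectral quantity, so `S(UρU†) = S(ρ)`, while every one-qubit state has entropy
at most `log 2` (Jensen for `-x log x`); this gives the reverse implication. Conversely, rotating
the eigenbasis of `ρ` onto the Bell basis makes every eigenprojection maximally entangled, so the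
reduced state is `I/2` whatever the spectrum, and the condition for that `U` reads `log 2 ≤ S(ρ)`.
-/

section Entropy

variable {n : Type*} [Fintype n] [DecidableEq n]

lemma vnEntropy_eq_sum_negMulLog {ρ : Matrix n n ℂ} (hρ : ρ.IsHermitian) :
    vnEntropy ρ = ∑ i, Real.negMulLog (hρ.eigenvalues i) := by
  simp [vnEntropy, hρ, Real.negMulLog]

lemma charpoly_unitary_conj {U : Matrix n n ℂ} (hU : U ∈ unitaryGroup n ℂ) (ρ : Matrix n n ℂ) :
    (U * ρ * Uᴴ).charpoly = ρ.charpoly := by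
  rw [mul_assoc, charpoly_mul_comm, mul_assoc, ← star_eq_conjTranspose,
    (mem_unitaryGroup_iff').mp hU, mul_one]

lemma vnEntropy_unitary_conj {U : Matrix n n ℂ} (hU : U ∈ unitaryGroup n ℂ)
    {ρ : Matrix n n ℂ} (hρ : ρ.IsHermitian) : vnEntropy (U * ρ * Uᴴ) = vnEntropy ρ := by
  have hσ : (U * ρ * Uᴴ).IsHermitian := by
    simpa using isHermitian_mul_mul_conjTranspose U hρ
  rw [vnEntropy_eq_sum_negMulLog hσ, vnEntropy_eq_sum_negMulLog hρ,
    (hσ.eigenvalues_eq_eigenvalues_iff hρ).mpr (charpoly_unitary_conj hU ρ)]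

lemma IsDensityMatrix.unitary_conj {U ρ : Matrix n n ℂ} (hU : U ∈ unitaryGroup n ℂ)
    (hρ : IsDensityMatrix ρ) : IsDensityMatrix (U * ρ * Uᴴ) := by
  refine ⟨hρ.1.mul_mul_conjTranspose_same U, ?_⟩
  rw [trace_mul_cycle, ← star_eq_conjTranspose, (mem_unitaryGroup_iff').mp hU, one_mul, hρ.2]

lemma vnEntropy_inv_card_smul_one [Nonempty n] :
    vnEntropy ((Fintype.card n : ℂ)⁻¹ • (1 : Matrix n n ℂ)) = Real.log (Fintype.card n) := by
  set r : ℝ := (Fintype.card n : ℝ)⁻¹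
  have hA : ((Fintype.card n : ℂ)⁻¹ • (1 : Matrix n n ℂ)) = algebraMap ℝ (Matrix n n ℂ) r := by
    rw [Algebra.algebraMap_eq_smul_one, ← Complex.coe_smul]
    simp [r]
  rw [hA]
  have hherm : (algebraMap ℝ (Matrix n n ℂ) r).IsHermitian := by
    simp [IsHermitian, Algebra.algebraMap_eq_smul_one, conjTranspose_smul]
  have heig (i : n) : hherm.eigenvalues i = r := by
    simpa [spectrum.scalar_eq] using hherm.eigenvalues_mem_spectrum_real i
  rw [vnEntropy_eq_sum_negMulLog hherm]
  simp [heig, r, Real.negMulLog, Real.log_inv]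

lemma sum_negMulLog_le_log_card {ι : Type*} [Fintype ι] {p : ι → ℝ} (hp : ∀ i, 0 ≤ p i)
    (hsum : ∑ i, p i = 1) : ∑ i, Real.negMulLog (p i) ≤ Real.log (Fintype.card ι) := by
  have hcard : (0 : ℝ) < Fintype.card ι := by
    have : Nonempty ι := by
      by_contra h
      simp [not_nonempty_iff.mp h] at hsum
    exact_mod_cast Fintype.card_pos
  have jensen := Real.concaveOn_negMulLog.le_map_sum (t := Finset.univ)
    (w := fun _ => (Fintype.card ι : ℝ)⁻¹) (p := p) (fun _ _ => by positivity)
    (by simp [hcard.ne']) (fun i _ => Set.mem_Ici.mpr (hp i))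
  simp only [smul_eq_mul, ← Finset.mul_sum, hsum, mul_one] at jensen
  rw [Real.negMulLog, Real.log_inv] at jensen
  field_simp at jensen
  linarith

lemma vnEntropy_le_log_card {ρ : Matrix n n ℂ} (hρ : IsDensityMatrix ρ) :
    vnEntropy ρ ≤ Real.log (Fintype.card n) := by
  obtain ⟨hpsd, htr⟩ := hρ
  rw [vnEntropy_eq_sum_negMulLog hpsd.isHermitian]
  refine sum_negMulLog_le_log_card hpsd.eigenvalues_nonneg ?_
  have htrace := hpsd.isHermitian.trace_eq_sum_eigenvalues
  rw [htr] at htrace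
  simpa using (congrArg Complex.re htrace).symm

end Entropy

section PartialTrace

variable {m n : ℕ}

lemma reducedB_eq_sum_submatrix (ρ : Matrix (Fin m × Fin n) (Fin m × Fin n) ℂ) :
    reducedB ρ = ∑ a, ρ.submatrix (Prod.mk a) (Prod.mk a) := by
  ext e f
  simp [reducedB, Matrix.sum_apply]

lemma trace_reducedB (ρ : Matrix (Fin m × Fin n) (Fin m × Fin n) ℂ) :
    (reducedB ρ).trace = ρ.trace := by
  simp only [trace, diag, reducedB]
  rw [Finset.sum_comm, Fintype.sum_prod_type]

lemma IsDensityMatrix.reducedB {ρ : Matrix (Fin m × Fin n) (Fin m × Fin n) ℂ}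
    (hρ : IsDensityMatrix ρ) : IsDensityMatrix (reducedB ρ) := by
  refine ⟨?_, (trace_reducedB ρ).trans hρ.2⟩
  rw [reducedB_eq_sum_submatrix]
  exact posSemidef_sum _ fun a _ => hρ.1.submatrix _

end PartialTrace

/-- Its columns are the Bell states `(|0, s⟩ + (-1)ᵗ |1, s + 1⟩) / √2`, indexed by `(s, t)`. -/
noncomputable def bellBasis : Matrix (Fin 2 × Fin 2) (Fin 2 × Fin 2) ℂ :=
  fun p q => if p.2 = p.1 + q.1 then (if p.1 = 1 ∧ q.2 = 1 then -1 else 1) / Real.sqrt 2 else 0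

lemma ofReal_sqrt_two_sq : (Real.sqrt 2 : ℂ) ^ 2 = 2 := by
  norm_cast
  exact Real.sq_sqrt zero_le_two

lemma bellBasis_mem_unitaryGroup : bellBasis ∈ unitaryGroup (Fin 2 × Fin 2) ℂ := by
  rw [mem_unitaryGroup_iff']
  ext ⟨a, b⟩ ⟨c, d⟩
  fin_cases a <;> fin_cases b <;> fin_cases c <;> fin_cases d <;>
    simp [bellBasis, mul_apply, Fintype.sum_prod_type, one_apply, Complex.conj_ofReal] <;>
    field_simp <;> rw [ofReal_sqrt_two_sq] <;> ring

lemma reducedB_bellBasis_conj_diagonal (d : Fin 2 × Fin 2 → ℂ) :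
    reducedB (bellBasis * diagonal d * bellBasisᴴ) = ((∑ k, d k) / 2) • 1 := by
  ext e f
  fin_cases e <;> fin_cases f <;>
    simp [reducedB, bellBasis, mul_apply, Fintype.sum_prod_type, one_apply,
      Complex.conj_ofReal] <;>
    field_simp <;> rw [ofReal_sqrt_two_sq] <;> ring

lemma exists_unitary_reducedB_conj_eq_smul_one {ρ : Matrix (Fin 2 × Fin 2) (Fin 2 × Fin 2) ℂ}
    (hρ : ρ.IsHermitian) :
    ∃ U ∈ unitaryGroup (Fin 2 × Fin 2) ℂ, reducedB (U * ρ * Uᴴ) = (ρ.trace / 2) • 1 := by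
  set V := star hρ.eigenvectorUnitary
  refine ⟨bellBasis * V, mul_mem bellBasis_mem_unitaryGroup V.2, ?_⟩
  have hdiag : (V : Matrix _ _ ℂ) * ρ * (V : Matrix _ _ ℂ)ᴴ
      = diagonal (RCLike.ofReal ∘ hρ.eigenvalues) := hρ.conjStarAlgAut_star_eigenvectorUnitary
  rw [conjTranspose_mul, ← mul_assoc, mul_assoc bellBasis, mul_assoc bellBasis,
    hdiag, reducedB_bellBasis_conj_diagonal, hρ.trace_eq_sum_eigenvalues]
  rfl

theorem absolutely_nonneg_conditional_entropy_iff
    (ρ : Matrix (Fin 2 × Fin 2) (Fin 2 × Fin 2) ℂ) (hρ : IsDensityMatrix ρ) :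
    (∀ U ∈ Matrix.unitaryGroup (Fin 2 × Fin 2) ℂ,
        vnEntropy (reducedB (U * ρ * Uᴴ)) ≤ vnEntropy (U * ρ * Uᴴ)) ↔
      Real.log 2 ≤ vnEntropy ρ := by
  have hherm := hρ.1.isHermitian
  constructor
  · intro h
    obtain ⟨U, hU, hred⟩ := exists_unitary_reducedB_conj_eq_smul_one hherm
    have hmixed : ρ.trace / 2 = (Fintype.card (Fin 2) : ℂ)⁻¹ := by simp [hρ.2]
    have hcond := h U hU
    rwa [hred, hmixed, vnEntropy_inv_card_smul_one, vnEntropy_unitary_conj hU hherm,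
      Fintype.card_fin, Nat.cast_ofNat] at hcond
  · intro h U hU
    calc vnEntropy (reducedB (U * ρ * Uᴴ)) ≤ Real.log (Fintype.card (Fin 2)) :=
          vnEntropy_le_log_card (hρ.unitary_conj hU).reducedB
      _ = Real.log 2 := by simp
      _ ≤ vnEntropy ρ := h
      _ = vnEntropy (U * ρ * Uᴴ) := (vnEntropy_unitary_conj hU hherm).symm
end
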